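/- Let 0 < l < 1, φ(ξ) = l·ξ·|ξ| − ξ³, and ρ > 1/4. Then there exists a constant C > 0 such that for every τ ∈ ℝ and every a ≥ 1, ∫_{|ξ| ≥ a} (1+|ξ|)² / (1 + |τ − φ(ξ)|)^{4ρ} dξ ≤ C. -/

import Mathlib

/-!
Substitute `u = φ(ξ)`. On `|ξ| ≥ 1` the phase is strictly decreasing (it is odd, decreasing on
`[1, ∞)`, and `φ(ξ) < 0 < φ(-ξ)` there), and its derivative `2l|ξ| − 3ξ²` has modulus at least
`(1 + |ξ|)² / 4` because `l ≤ 1`. So the integral is at most `4 ∫ (1 + |τ − u|)^(-4ρ) du`, which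
is finite and independent of `τ` since `4ρ > 1`.
-/

open MeasureTheory ENNReal

/-- The phase function of the generalized Benjamin equation: φ(ξ) = l·ξ·|ξ| − ξ³. -/
noncomputable def benjaminPhase (l : ℝ) (ξ : ℝ) : ℝ := l * ξ * |ξ| - ξ ^ 3

open Set

theorem setLIntegral_mul_comp_le_of_le_abs_deriv {f f' : ℝ → ℝ} {s : Set ℝ}
    (hs : MeasurableSet s) (hf' : ∀ x ∈ s, HasDerivWithinAt f (f' x) s x) (hf : InjOn f s)
    {w : ℝ → ℝ≥0∞} {c : ℝ≥0∞} (hc : c ≠ ∞) (hw : ∀ x ∈ s, w x ≤ c * ENNReal.ofReal |f' x|)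
    (g : ℝ → ℝ≥0∞) :
    ∫⁻ x in s, w x * g (f x) ≤ c * ∫⁻ u, g u :=
  calc ∫⁻ x in s, w x * g (f x)
      ≤ ∫⁻ x in s, c * (ENNReal.ofReal |f' x| * g (f x)) :=
        setLIntegral_mono' hs fun x hx => by rw [← mul_assoc]; gcongr; exact hw x hx
    _ = c * ∫⁻ u in f '' s, g u := by
        rw [lintegral_const_mul' _ _ hc, lintegral_image_eq_lintegral_abs_deriv_mul hs hf' hf]
    _ ≤ c * ∫⁻ u, g u := mul_le_mul_right (setLIntegral_le_lintegral _ _) c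

noncomputable def benjaminPhaseDeriv (l : ℝ) (ξ : ℝ) : ℝ := 2 * l * |ξ| - 3 * ξ ^ 2

section BenjaminPhase

variable {l : ℝ}

theorem hasDerivAt_benjaminPhase {x : ℝ} (hx : x ≠ 0) :
    HasDerivAt (benjaminPhase l) (benjaminPhaseDeriv l x) x := by
  have : HasDerivAt (benjaminPhase l) (l * 1 * |x| + l * x * SignType.sign x - 3 * x ^ 2) x :=
    (((hasDerivAt_id x).const_mul l).mul (hasDerivAt_abs hx)).sub (hasDerivAt_pow 3 x)
  rwa [mul_assoc l x, self_mul_sign, mul_one, ← two_mul, ← mul_assoc] at this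

theorem benjaminPhase_neg (l x : ℝ) : benjaminPhase l (-x) = -benjaminPhase l x := by
  simp only [benjaminPhase, abs_neg]; ring

theorem benjaminPhase_neg_of_one_le (hl : l < 1) {x : ℝ} (hx : 1 ≤ x) : benjaminPhase l x < 0 := by
  rw [benjaminPhase, abs_of_pos (by linarith)]
  nlinarith [mul_pos (by linarith : (0 : ℝ) < x) (by linarith : (0 : ℝ) < x)]

theorem benjaminPhase_strictAntiOn_Ici (hl : l ≤ 1) : StrictAntiOn (benjaminPhase l) (Ici 1) := by
  intro x (hx : 1 ≤ x) y (hy : 1 ≤ y) hxy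
  rw [benjaminPhase, benjaminPhase, abs_of_pos (by linarith), abs_of_pos (by linarith)]
  nlinarith [mul_pos (sub_pos.2 hxy) (by nlinarith : 0 < x ^ 2 + x * y + y ^ 2 - l * (x + y))]

theorem benjaminPhase_strictAntiOn (hl : l < 1) :
    StrictAntiOn (benjaminPhase l) {x | 1 ≤ |x|} := by
  have hanti := benjaminPhase_strictAntiOn_Ici hl.le
  intro x (hx : 1 ≤ |x|) y (hy : 1 ≤ |y|) hxy
  rcases le_abs'.1 hx with hx | hx <;> rcases le_abs'.1 hy with hy | hy
  · have := hanti (show 1 ≤ -y by linarith) (show 1 ≤ -x by linarith) (by linarith)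
    rw [benjaminPhase_neg, benjaminPhase_neg] at this
    linarith
  · have hx' := benjaminPhase_neg_of_one_le hl (show 1 ≤ -x by linarith)
    rw [benjaminPhase_neg] at hx'
    linarith [benjaminPhase_neg_of_one_le hl hy]
  · linarith
  · exact hanti hx hy hxy

theorem sq_one_add_abs_le_four_mul_abs_benjaminPhaseDeriv (hl : l ≤ 1) {x : ℝ} (hx : 1 ≤ |x|) :
    (1 + |x|) ^ 2 ≤ 4 * |benjaminPhaseDeriv l x| := by
  have hd : 3 * x ^ 2 - 2 * l * |x| ≤ |benjaminPhaseDeriv l x| := by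
    have := neg_le_abs (benjaminPhaseDeriv l x)
    rw [benjaminPhaseDeriv] at this ⊢
    linarith
  nlinarith [sq_abs x, mul_nonneg (by linarith : 0 ≤ 1 - l) (abs_nonneg x)]

end BenjaminPhase

theorem integral_highfreq_bounded_general (l ρ : ℝ) (hl1 : l < 1)
    (hρ : 1 / 4 < ρ) :
    ∃ C : ℝ, 0 < C ∧ ∀ τ : ℝ, ∀ a : ℝ, 1 ≤ a →
      (∫⁻ ξ : ℝ in {ξ : ℝ | a ≤ |ξ|}, ENNReal.ofReal
          ((1 + |ξ|) ^ 2 / (1 + |τ - benjaminPhase l ξ|) ^ (4 * ρ)))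
        ≤ ENNReal.ofReal C := by
  set I := ∫⁻ u : ℝ, ENNReal.ofReal ((1 + ‖u‖) ^ (-(4 * ρ)))
  have hI : I ≠ ∞ := (finite_integral_one_add_norm (by simp; linarith)).ne
  refine ⟨4 * I.toReal + 1, by positivity, fun τ a ha => ?_⟩
  set g : ℝ → ℝ≥0∞ := fun u => ENNReal.ofReal ((1 + |τ - u|) ^ (-(4 * ρ)))
  have hsub : {ξ : ℝ | a ≤ |ξ|} ⊆ {ξ | 1 ≤ |ξ|} := fun ξ hξ => ha.trans hξ
  have hsplit (ξ : ℝ) : ENNReal.ofReal ((1 + |ξ|) ^ 2 / (1 + |τ - benjaminPhase l ξ|) ^ (4 * ρ))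
      = ENNReal.ofReal ((1 + |ξ|) ^ 2) * g (benjaminPhase l ξ) := by
    rw [div_eq_mul_inv, ← Real.rpow_neg (by positivity), ENNReal.ofReal_mul (by positivity)]
  calc _ = ∫⁻ ξ in {ξ : ℝ | a ≤ |ξ|}, ENNReal.ofReal ((1 + |ξ|) ^ 2) * g (benjaminPhase l ξ) := by
          simp_rw [hsplit]
    _ ≤ 4 * ∫⁻ u, g u := by
        refine setLIntegral_mul_comp_le_of_le_abs_deriv (measurableSet_le measurable_const
          measurable_abs) (fun x hx => (hasDerivAt_benjaminPhase ?_).hasDerivWithinAt)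
          ((benjaminPhase_strictAntiOn hl1).injOn.mono hsub) (by simp) (fun x hx => ?_) g
        · exact abs_pos.1 (one_pos.trans_le (hsub hx))
        · rw [← ENNReal.ofReal_ofNat, ← ENNReal.ofReal_mul (by norm_num)]
          exact ENNReal.ofReal_le_ofReal
            (sq_one_add_abs_le_four_mul_abs_benjaminPhaseDeriv hl1.le (hsub hx))
    _ = 4 * I := by
        rw [lintegral_sub_left_eq_self (fun u => ENNReal.ofReal ((1 + |u|) ^ (-(4 * ρ)))) τ]
        simp only [I, Real.norm_eq_abs]
    _ ≤ ENNReal.ofReal (4 * I.toReal + 1) := by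
        rw [ENNReal.ofReal_add (by positivity) zero_le_one, ENNReal.ofReal_mul (by norm_num),
          ENNReal.ofReal_toReal hI]
        simp

/-- High-frequency bound in Lemma 4.1: for 0 < l < 1 and ρ > 1/4 there is C > 0 such
    that for all τ ∈ ℝ and a ≥ 1, ∫_{|ξ| ≥ a} (1+|ξ|)²/(1+|τ−φ(ξ)|)^{4ρ} dξ ≤ C. -/
theorem integral_highfreq_bounded (l ρ : ℝ) (hl0 : 0 < l) (hl1 : l < 1)
    (hρ : 1 / 4 < ρ) :
    ∃ C : ℝ, 0 < C ∧ ∀ τ : ℝ, ∀ a : ℝ, 1 ≤ a →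
      (∫⁻ ξ : ℝ in {ξ : ℝ | a ≤ |ξ|}, ENNReal.ofReal
          ((1 + |ξ|) ^ 2 / (1 + |τ - benjaminPhase l ξ|) ^ (4 * ρ)))
        ≤ ENNReal.ofReal C :=
  integral_highfreq_bounded_general l ρ hl1 hρ
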